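/- arXiv:1601.04429 — 2 statements merged into one kernel-verified Lean document; each statement's English description precedes it below -/
import Mathlib

section
/- Let {q_k} be a sequence of real numbers with 1 ≤ q_k < ∞ for all k. Then ℓ^{q_k} = ℓ¹ (i.e., for every real sequence x, ∑_k |x_k|^{q_k} < ∞ if and only if ∑_k |x_k| < ∞) if and only if there exists a natural number N > 1 such that ∑_k N^{−1/(q_k−1)} < ∞, where the term N^{−1/(q_k−1)} is interpreted as 0 when q_k = 1 (convention N^{−∞} = 0). -/
/-!
Put `w_N(q) = N^{-1/(q-1)}` and `w_N(1) = 0` (`critWeight N q`). For `a ≥ 0` either `a ≤ w_N(q)`, or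
`a^{q-1} ≥ w_N(q)^{q-1} = 1/N` and hence `a ≤ N a^q`; so `a ≤ N a^q + w_N(q)`, and
`∑ w_N(q_k) < ∞` gives `ℓ^{q_k} ⊆ ℓ¹`. The inclusion `ℓ¹ ⊆ ℓ^{q_k}` always holds since
`a^q ≤ a` for `a ≤ 1`.

Conversely, if `∑_k w_N(q_k) = ∞` for every `N`, cut `ℕ` into consecutive finite blocks
`B_n` with `s_n = ∑_{k ∈ B_n} w_{2^{n+1}}(q_k) ≥ 1`, and put `a_k = w_{2^{n+1}}(q_k) / s_n` on
`B_n`. Each block contributes `1` to `∑ a_k`, but, as `w_N(q)^q = w_N(q) / N`, at most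
`2^{-(n+1)}` to `∑ a_k^{q_k}`.
-/

open Filter Topology Finset

noncomputable def critWeight (N q : ℝ) : ℝ := if q = 1 then 0 else N ^ (-(1 / (q - 1)))

section CritWeight

variable {N q : ℝ}

lemma critWeight_nonneg (hN : 0 ≤ N) : 0 ≤ critWeight N q := by
  unfold critWeight
  split_ifs
  · exact le_rfl
  · exact Real.rpow_nonneg hN _

lemma critWeight_rpow_sub_one (hN : 0 < N) (hq : q ≠ 1) : critWeight N q ^ (q - 1) = N⁻¹ := by
  rw [critWeight, if_neg hq, ← Real.rpow_mul hN.le, neg_mul,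
    one_div_mul_cancel (sub_ne_zero.2 hq), Real.rpow_neg_one]

lemma critWeight_rpow (hN : 0 < N) : critWeight N q ^ q = critWeight N q / N := by
  rcases eq_or_ne q 1 with rfl | hq
  · simp [critWeight]
  have hw : critWeight N q ≠ 0 := by
    rw [critWeight, if_neg hq]
    exact (Real.rpow_pos_of_pos hN _).ne'
  have h := Real.rpow_sub_one hw q
  rw [critWeight_rpow_sub_one hN hq, eq_div_iff hw] at h
  rw [← h, div_eq_inv_mul]

lemma le_mul_rpow_add_critWeight (hN : 1 ≤ N) (hq : 1 ≤ q) {a : ℝ} (ha : 0 ≤ a) :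
    a ≤ N * a ^ q + critWeight N q := by
  have hN0 : 0 < N := zero_lt_one.trans_le hN
  have hw0 : 0 ≤ critWeight N q := critWeight_nonneg hN0.le
  rcases le_or_gt a (critWeight N q) with h | h
  · have : 0 ≤ N * a ^ q := by positivity
    linarith
  have ha0 : 0 < a := hw0.trans_lt h
  have hinv : N⁻¹ ≤ a ^ (q - 1) := by
    rcases eq_or_ne q 1 with rfl | hq1
    · simpa using inv_le_one_of_one_le₀ hN
    · rw [← critWeight_rpow_sub_one hN0 hq1]
      exact Real.rpow_le_rpow hw0 h.le (sub_nonneg.2 hq)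
  have : a ≤ N * a ^ q := calc
    a = N * (a * N⁻¹) := by field_simp
    _ ≤ N * (a * a ^ (q - 1)) := by gcongr
    _ = N * a ^ q := by rw [Real.rpow_sub_one ha0.ne', mul_div_cancel₀ _ ha0.ne']
  linarith

end CritWeight

section Exponents

variable {q a : ℕ → ℝ}

lemma summable_of_summable_rpow {N : ℝ} (hN : 1 ≤ N) (hq : ∀ k, 1 ≤ q k)
    (hw : Summable fun k => critWeight N (q k)) (ha : ∀ k, 0 ≤ a k)
    (h : Summable fun k => a k ^ q k) : Summable a :=
  .of_nonneg_of_le ha (fun k => le_mul_rpow_add_critWeight hN (hq k) (ha k))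
    ((h.mul_left N).add hw)

lemma summable_rpow_of_summable (hq : ∀ k, 1 ≤ q k) (ha : ∀ k, 0 ≤ a k) (h : Summable a) :
    Summable fun k => a k ^ q k := by
  refine h.of_norm_bounded_eventually_nat ?_
  filter_upwards [h.tendsto_atTop_zero.eventually_le_const zero_lt_one] with k hk
  rw [Real.norm_of_nonneg (Real.rpow_nonneg (ha k) _)]
  exact Real.rpow_le_self_of_le_one (ha k) hk (hq k)

end Exponents

lemma div_rpow_le_rpow_div {a s r : ℝ} (ha : 0 ≤ a) (hs : 1 ≤ s) (hr : 1 ≤ r) :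
    (a / s) ^ r ≤ a ^ r / s := by
  rw [Real.div_rpow ha (zero_le_one.trans hs)]
  exact div_le_div_of_nonneg_left (Real.rpow_nonneg ha _) (zero_lt_one.trans_le hs)
    (Real.self_le_rpow_of_one_le hs hr)

section Blocks

variable {idx : ℕ → ℕ}

lemma sum_range_sum_Ico {M : Type*} [AddCommMonoid M] (hidx : Monotone idx) (h0 : idx 0 = 0)
    (g : ℕ → M) (n : ℕ) :
    ∑ j ∈ range n, ∑ k ∈ Ico (idx j) (idx (j + 1)), g k = ∑ k ∈ range (idx n), g k := by
  induction n with
  | zero => simp [h0]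
  | succ n ih => rw [sum_range_succ, ih, sum_range_add_sum_Ico _ (hidx n.le_succ)]

lemma summable_iff_summable_sum_Ico (hidx : StrictMono idx) (h0 : idx 0 = 0) {g : ℕ → ℝ}
    (hg : ∀ k, 0 ≤ g k) :
    Summable g ↔ Summable fun n => ∑ k ∈ Ico (idx n) (idx (n + 1)), g k := by
  have hS : Monotone fun m => ∑ k ∈ range m, g k := fun m n hmn =>
    sum_le_sum_of_subset_of_nonneg (range_subset_range.2 hmn) fun k _ _ => hg k
  rw [← not_iff_not, not_summable_iff_tendsto_nat_atTop_of_nonneg hg,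
    not_summable_iff_tendsto_nat_atTop_of_nonneg fun n => sum_nonneg fun k _ => hg k]
  simp only [sum_range_sum_Ico hidx.monotone h0]
  refine ⟨fun h => h.comp hidx.tendsto_atTop, fun h => tendsto_atTop_atTop_of_monotone hS ?_⟩
  intro b
  obtain ⟨n, hn⟩ := (h.eventually_ge_atTop b).exists
  exact ⟨idx n, hn⟩

def blockIndex (idx : ℕ → ℕ) (k : ℕ) : ℕ := Nat.findGreatest (fun n => idx n ≤ k) k

lemma blockIndex_eq (hidx : StrictMono idx) {n k : ℕ} (hk : k ∈ Ico (idx n) (idx (n + 1))) :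
    blockIndex idx k = n := by
  rw [mem_Ico] at hk
  refine Nat.findGreatest_eq_iff.2 ⟨hidx.le_apply.trans hk.1, fun _ => hk.1, fun j hj _ => ?_⟩
  exact (hk.2.trans_le (hidx.monotone hj)).not_ge

lemma sum_Ico_blockIndex {M : Type*} [AddCommMonoid M] (hidx : StrictMono idx)
    (f : ℕ → ℕ → M) (n : ℕ) :
    ∑ k ∈ Ico (idx n) (idx (n + 1)), f (blockIndex idx k) k =
      ∑ k ∈ Ico (idx n) (idx (n + 1)), f n k :=
  sum_congr rfl fun k hk => by rw [blockIndex_eq hidx hk]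

lemma exists_lt_one_le_sum_Ico {f : ℕ → ℝ} (hf : ∀ k, 0 ≤ f k) (hns : ¬Summable f) (m : ℕ) :
    ∃ M, m < M ∧ 1 ≤ ∑ k ∈ Ico m M, f k := by
  obtain ⟨M, hM, hmM⟩ := (((not_summable_iff_tendsto_nat_atTop_of_nonneg hf).1 hns
    |>.eventually_ge_atTop (∑ k ∈ range m, f k + 1)).and (eventually_gt_atTop m)).exists
  refine ⟨M, hmM, ?_⟩
  rw [← sum_range_add_sum_Ico _ hmM.le] at hM
  linarith

lemma exists_strictMono_one_le_sum_Ico (f : ℕ → ℕ → ℝ) (hf : ∀ n k, 0 ≤ f n k)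
    (hns : ∀ n, ¬Summable (f n)) :
    ∃ idx : ℕ → ℕ, StrictMono idx ∧ idx 0 = 0 ∧
      ∀ n, 1 ≤ ∑ k ∈ Ico (idx n) (idx (n + 1)), f n k := by
  choose next hlt hge using fun n => exists_lt_one_le_sum_Ico (hf n) (hns n)
  let idx : ℕ → ℕ := fun n => Nat.rec 0 (fun n i => next n i) n
  exact ⟨idx, strictMono_nat_of_lt_succ fun n => hlt n (idx n), rfl, fun n => hge n (idx n)⟩

end Blocks

lemma exists_summable_rpow_not_summable {q : ℕ → ℝ} (hq : ∀ k, 1 ≤ q k)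
    (hw : ∀ n : ℕ, ¬Summable fun k => critWeight (2 ^ (n + 1)) (q k)) :
    ∃ a : ℕ → ℝ, (∀ k, 0 ≤ a k) ∧ (Summable fun k => a k ^ q k) ∧ ¬Summable a := by
  set w : ℕ → ℕ → ℝ := fun n k => critWeight (2 ^ (n + 1)) (q k)
  have hw0 : ∀ n k, 0 ≤ w n k := fun n k => critWeight_nonneg (by positivity)
  obtain ⟨idx, hidx, h0, hs⟩ := exists_strictMono_one_le_sum_Ico w hw0 hw
  set s : ℕ → ℝ := fun n => ∑ k ∈ Ico (idx n) (idx (n + 1)), w n k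
  have hs0 : ∀ n, 0 < s n := fun n => zero_lt_one.trans_le (hs n)
  set a : ℕ → ℝ := fun k => w (blockIndex idx k) k / s (blockIndex idx k)
  have ha0 : ∀ k, 0 ≤ a k := fun k => div_nonneg (hw0 _ _) (hs0 _).le
  refine ⟨a, ha0, ?_, ?_⟩
  · rw [summable_iff_summable_sum_Ico hidx h0 fun k => Real.rpow_nonneg (ha0 k) _]
    refine ((summable_nat_add_iff 1).2 summable_geometric_two).of_nonneg_of_le
      (fun n => sum_nonneg fun k _ => Real.rpow_nonneg (ha0 k) _) fun n => ?_
    rw [sum_Ico_blockIndex hidx fun j k => (w j k / s j) ^ q k]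
    calc ∑ k ∈ Ico (idx n) (idx (n + 1)), (w n k / s n) ^ q k
        ≤ ∑ k ∈ Ico (idx n) (idx (n + 1)), w n k ^ q k / s n := by
          gcongr with k
          exact div_rpow_le_rpow_div (hw0 n k) (hs n) (hq k)
      _ = ∑ k ∈ Ico (idx n) (idx (n + 1)), w n k / 2 ^ (n + 1) / s n := by
          simp only [w, critWeight_rpow (by positivity : (0 : ℝ) < 2 ^ (n + 1))]
      _ = (1 / 2) ^ (n + 1) := by
          rw [← sum_div, ← sum_div]
          change s n / _ / s n = _
          rw [div_right_comm, div_self (hs0 n).ne', one_div_pow]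
  · rw [summable_iff_summable_sum_Ico hidx h0 ha0]
    have hblock : ∀ n, ∑ k ∈ Ico (idx n) (idx (n + 1)), a k = 1 := fun n => by
      rw [sum_Ico_blockIndex hidx fun j k => w j k / s j, ← sum_div, div_self (hs0 n).ne']
    simp only [hblock]
    exact fun h => one_ne_zero (tendsto_const_nhds_iff.1 h.tendsto_atTop_zero)

/-- for exponents `1 ≤ q k < ∞`, one has `ℓ^{q_k} = ℓ¹`
(i.e. for every real sequence `x`, `∑_k |x_k|^{q_k} < ∞ ↔ ∑_k |x_k| < ∞`) if and only if
there is a natural number `N > 1` with `∑_k N^{−1/(q_k−1)} < ∞`, the term being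
interpreted as `0` when `q_k = 1` (convention `N^{−∞} = 0`). -/
theorem stmt_9 (q : ℕ → ℝ) (hq1 : ∀ k, 1 ≤ q k) :
    (∀ x : ℕ → ℝ, (Summable fun k => |x k| ^ q k) ↔ Summable fun k => |x k|) ↔
    (∃ N : ℕ, 1 < N ∧
      Summable fun k => if q k = 1 then (0 : ℝ) else (N : ℝ) ^ (-(1 / (q k - 1)))) := by
  constructor
  · intro H
    by_contra! hc
    obtain ⟨a, ha0, haq, ha⟩ := exists_summable_rpow_not_summable hq1 fun n hs =>
      hc (2 ^ (n + 1)) (Nat.one_lt_two_pow n.succ_ne_zero) (by exact_mod_cast hs)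
    have habs : ∀ k, |a k| = a k := fun k => abs_of_nonneg (ha0 k)
    exact ha (by simpa only [habs] using (H a).1 (by simpa only [habs] using haq))
  · rintro ⟨N, hN, hw⟩ x
    have hN1 : (1 : ℝ) ≤ N := by exact_mod_cast hN.le
    exact ⟨summable_of_summable_rpow hN1 hq1 hw fun k => abs_nonneg _,
      summable_rpow_of_summable hq1 fun k => abs_nonneg _⟩
end

section
/- Let Y be a real Hilbert space, A : ℓ² → Y a continuous linear operator, y ∈ Y, α > 0, and let {p_k} be exponents with 0 < p_k < 1 for all k and inf_k p_k > 0. Let x* = {x*_k} ∈ ℓ¹ with ∑_k |x*_k|^{p_k} < ∞ be a local minimizer of the functional F(u) = (1/2)‖Au − y‖²_Y + α ∑_k |u_k|^{p_k} over ℓ¹, in the sense that there exists ε > 0 such that F(x*) ≤ F(u) for all u ∈ ℓ¹ with ∑_k |u_k − x*_k| < ε. Then x* is sparse: the set {k : x*_k ≠ 0} is finite. -/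
/-!
Let `w = A† (A x* - y)`. Setting a single coordinate `x*_k = a` to zero changes the fidelity
term by at most `|w_k| |a| + ‖A‖² a² / 2` and lowers the penalty by `α |a|^{p_k} ≥ α |a|` once
`|a| ≤ 1`. Since both `x*_k` and `w_k` tend to zero, every coordinate of the support far enough
out would yield a strictly better competitor within distance `ε`, so the support is finite.
-/

open Filter Topology
open scoped ENNReal

theorem lp.tendsto_norm_apply_cofinite_zero {ι : Type*} {E : ι → Type*}
    [∀ i, NormedAddCommGroup (E i)] {p : ℝ≥0∞} (hp0 : p ≠ 0) (hp : p ≠ ∞) (f : lp E p) :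
    Tendsto (fun i => ‖f i‖) cofinite (𝓝 0) := by
  have hp' : 0 < p.toReal := ENNReal.toReal_pos hp0 hp
  have h := ((lp.memℓp f).summable hp').tendsto_cofinite_zero.rpow_const
    (p := p.toReal⁻¹) (Or.inr (inv_nonneg.2 hp'.le))
  rw [Real.zero_rpow (inv_ne_zero hp'.ne')] at h
  refine h.congr fun i => ?_
  exact Real.rpow_rpow_inv (norm_nonneg _) hp'.ne'

theorem lp.coeFn_sub_single_self {ι : Type*} {E : ι → Type*} [DecidableEq ι]
    [∀ i, NormedAddCommGroup (E i)] {p : ℝ≥0∞} (f : lp E p) (i : ι) :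
    ⇑(f - lp.single p i (f i)) = Function.update f i 0 := by
  ext j
  rcases eq_or_ne j i with rfl | hj
  · simp
  · simp [hj]

theorem norm_map_sub_sub_sq_le {E F : Type*} [NormedAddCommGroup E] [InnerProductSpace ℝ E]
    [NormedAddCommGroup F] [InnerProductSpace ℝ F] (T : E →L[ℝ] F) (x v : E) (y : F) :
    ‖T (x - v) - y‖ ^ 2 ≤ ‖T x - y‖ ^ 2 - 2 * inner ℝ (T x - y) (T v) + ‖T‖ ^ 2 * ‖v‖ ^ 2 := by
  have hTv : ‖T v‖ ^ 2 ≤ ‖T‖ ^ 2 * ‖v‖ ^ 2 := by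
    rw [← mul_pow]; exact pow_le_pow_left₀ (norm_nonneg _) (T.le_opNorm v) 2
  have hexp : T (x - v) - y = (T x - y) - T v := by rw [map_sub]; abel
  rw [hexp, norm_sub_sq_real]
  linarith

section Penalty

variable {ι : Type*} (p : ι → ℝ)

noncomputable def lpPenalty (u : ι → ℝ) : ℝ≥0∞ := ∑' k, ENNReal.ofReal (|u k| ^ p k)

variable {p}

theorem lpPenalty_ne_top {u : ι → ℝ} (hu : Summable fun k => |u k| ^ p k) : lpPenalty p u ≠ ⊤ := by
  rw [lpPenalty, ← ENNReal.ofReal_tsum_of_nonneg (fun k => by positivity) hu]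
  exact ENNReal.ofReal_ne_top

theorem lpPenalty_eq_add_update [DecidableEq ι] (u : ι → ℝ) {i : ι} (hpi : p i ≠ 0) :
    lpPenalty p u = ENNReal.ofReal (|u i| ^ p i) + lpPenalty p (Function.update u i 0) := by
  rw [lpPenalty, ENNReal.tsum_eq_add_tsum_ite i, lpPenalty]
  congr 1
  refine tsum_congr fun j => ?_
  rcases eq_or_ne j i with rfl | hj
  · simp [Real.zero_rpow hpi]
  · simp [hj]

end Penalty

theorem summable_abs_update {ι : Type*} [DecidableEq ι] {u : ι → ℝ}
    (hu : Summable fun k => |u k|) (i : ι) (a : ℝ) :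
    Summable fun k => |Function.update u i a k| := by
  refine (hu.update i |a|).congr fun k => ?_
  rcases eq_or_ne k i with rfl | hk <;> simp [*]

theorem tsum_abs_update_sub {ι : Type*} [DecidableEq ι] (u : ι → ℝ) (i : ι) (a : ℝ) :
    ∑' k, |Function.update u i a k - u k| = |a - u i| := by
  rw [tsum_eq_single i fun k hk => by simp [hk]]
  simp

section Functional

variable {ι Y : Type*} [NormedAddCommGroup Y] [InnerProductSpace ℝ Y]
  (A : lp (fun _ : ι => ℝ) 2 →L[ℝ] Y) (y : Y) (α : ℝ) (p : ι → ℝ)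

noncomputable def sparsityFunctional (u : lp (fun _ : ι => ℝ) 2) : ℝ≥0∞ :=
  ENNReal.ofReal ((1 / 2) * ‖A u - y‖ ^ 2) + ENNReal.ofReal α * lpPenalty p u

/-- The Riesz representative of `v ↦ ⟪A x - y, A v⟫`, i.e. `A† (A x - y)`; it exists without
completeness of `Y` because `ℓ²` itself is complete. -/
noncomputable def residualGradient (x : lp (fun _ : ι => ℝ) 2) : lp (fun _ : ι => ℝ) 2 :=
  (InnerProductSpace.toDual ℝ _).symm ((innerSL ℝ (A x - y)).comp A)

theorem inner_map_single_eq_residualGradient_mul [DecidableEq ι] (x : lp (fun _ : ι => ℝ) 2)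
    (i : ι) (a : ℝ) :
    inner ℝ (A x - y) (A (lp.single 2 i a)) = residualGradient A y x i * a := by
  have h := InnerProductSpace.toDual_symm_apply (x := lp.single 2 i a)
    (y := (innerSL ℝ (A x - y)).comp A)
  simp only [ContinuousLinearMap.comp_apply, innerSL_apply_apply, lp.inner_single_right] at h
  rw [← h, residualGradient, Real.inner_apply]

variable {A y α p}

theorem mul_rpow_le_of_sparsityFunctional_le [DecidableEq ι] {x : lp (fun _ : ι => ℝ) 2} {i : ι}
    (hα : 0 ≤ α) (hpi : p i ≠ 0) (hx : lpPenalty p x ≠ ⊤)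
    (hle : sparsityFunctional A y α p x ≤ sparsityFunctional A y α p (x - lp.single 2 i (x i))) :
    α * |x i| ^ p i ≤ |x i| * (|residualGradient A y x i| + ‖A‖ ^ 2 * |x i| / 2) := by
  set a := x i
  set u := x - lp.single 2 i a
  set P := lpPenalty p u
  have hsplit : lpPenalty p x = ENNReal.ofReal (|a| ^ p i) + P := by
    rw [lpPenalty_eq_add_update _ hpi, ← lp.coeFn_sub_single_self]
  have hP : ENNReal.ofReal α * P ≠ ⊤ :=
    ENNReal.mul_ne_top ENNReal.ofReal_ne_top fun h => hx (by rw [hsplit, h]; simp)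
  have hdecrease : (1 / 2) * ‖A x - y‖ ^ 2 + α * |a| ^ p i ≤ (1 / 2) * ‖A u - y‖ ^ 2 := by
    rw [sparsityFunctional, sparsityFunctional, hsplit, mul_add, ← add_assoc] at hle
    have h := ENNReal.le_of_add_le_add_right hP hle
    rwa [← ENNReal.ofReal_mul hα, ← ENNReal.ofReal_add (by positivity) (by positivity),
      ENNReal.ofReal_le_ofReal_iff (by positivity)] at h
  have hquad : ‖A u - y‖ ^ 2 ≤
      ‖A x - y‖ ^ 2 - 2 * (residualGradient A y x i * a) + ‖A‖ ^ 2 * |a| ^ 2 := by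
    have h := norm_map_sub_sub_sq_le A x (lp.single 2 i a) y
    rwa [inner_map_single_eq_residualGradient_mul, lp.norm_single (by norm_num),
      Real.norm_eq_abs] at h
  have hcross : -(residualGradient A y x i * a) ≤ |residualGradient A y x i| * |a| := by
    rw [← abs_mul]; exact neg_le_abs _
  linarith

end Functional

theorem stmt_19_general
    {Y : Type*} [NormedAddCommGroup Y] [InnerProductSpace ℝ Y]
    (A : lp (fun _ : ℕ => ℝ) 2 →L[ℝ] Y) (y : Y) (α : ℝ) (hα : 0 < α)
    (p : ℕ → ℝ) (hp0 : ∀ k, 0 < p k) (hp1 : ∀ k, p k < 1)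
    (xstar : lp (fun _ : ℕ => ℝ) 2)
    (hx1 : Summable fun k => |xstar k|)
    (hxp : Summable fun k => |xstar k| ^ p k)
    (ε : ℝ) (hε : 0 < ε)
    (hmin : ∀ u : lp (fun _ : ℕ => ℝ) 2, (Summable fun k => |u k|) →
      (∑' k, |u k - xstar k|) < ε →
      ENNReal.ofReal ((1 / 2) * ‖A xstar - y‖ ^ 2) +
          ENNReal.ofReal α * ∑' k, ENNReal.ofReal (|xstar k| ^ p k) ≤
        ENNReal.ofReal ((1 / 2) * ‖A u - y‖ ^ 2) +
          ENNReal.ofReal α * ∑' k, ENNReal.ofReal (|u k| ^ p k)) :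
    {k : ℕ | xstar k ≠ 0}.Finite := by
  set w := residualGradient A y xstar
  have hx0 : Tendsto (fun k => |xstar k|) cofinite (𝓝 0) := hx1.tendsto_cofinite_zero
  have hw0 : Tendsto (fun k => |w k|) cofinite (𝓝 0) :=
    lp.tendsto_norm_apply_cofinite_zero (by norm_num) (by norm_num) w
  have hAx0 : Tendsto (fun k => ‖A‖ ^ 2 * |xstar k|) cofinite (𝓝 0) := by
    simpa using hx0.const_mul (‖A‖ ^ 2)
  have hsmall : ∀ᶠ k in cofinite,
      |xstar k| < ε ∧ |xstar k| < 1 ∧ ‖A‖ ^ 2 * |xstar k| < α ∧ |w k| < α / 2 := by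
    filter_upwards [hx0.eventually_lt_const hε, hx0.eventually_lt_const one_pos,
      hAx0.eventually_lt_const hα, hw0.eventually_lt_const (half_pos hα)] with k h1 h2 h3 h4
    exact ⟨h1, h2, h3, h4⟩
  by_contra hinf
  obtain ⟨k, hk, hkε, hk1, hkA, hkw⟩ :=
    ((frequently_cofinite_iff_infinite.2 hinf).and_eventually hsmall).exists
  have hle : sparsityFunctional A y α p xstar ≤
      sparsityFunctional A y α p (xstar - lp.single 2 k (xstar k)) := by
    unfold sparsityFunctional lpPenalty
    exact hmin _
      (by rw [lp.coeFn_sub_single_self]; exact summable_abs_update hx1 k 0)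
      (by rw [lp.coeFn_sub_single_self, tsum_abs_update_sub]; simpa using hkε)
  have hbound :=
    mul_rpow_le_of_sparsityFunctional_le hα.le (hp0 k).ne' (lpPenalty_ne_top hxp) hle
  have hself : |xstar k| ≤ |xstar k| ^ p k :=
    Real.self_le_rpow_of_le_one (abs_nonneg _) hk1.le (hp1 k).le
  have hpos : 0 < |xstar k| := abs_pos.2 hk
  have hgain : |xstar k| * (|w k| + ‖A‖ ^ 2 * |xstar k| / 2) < α * |xstar k| ^ p k :=
    calc |xstar k| * (|w k| + ‖A‖ ^ 2 * |xstar k| / 2) < |xstar k| * α := by gcongr; linarith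
      _ ≤ α * |xstar k| ^ p k := by rw [mul_comm]; gcongr
  exact (hbound.trans_lt hgain).false

/-- Let `Y` be a real Hilbert space, `A : ℓ² → Y` continuous linear,
`y ∈ Y`, `α > 0`, and exponents `0 < p_k < 1` with `inf_k p_k > 0`. If `x* ∈ ℓ¹`
(regarded in `ℓ²`) with `∑_k |x*_k|^{p_k} < ∞` is a local minimizer of
`F(u) = ½‖Au − y‖² + α ∑_k |u_k|^{p_k}` over `ℓ¹` (the penalty series summed in
`[0,∞]`), i.e. `F(x*) ≤ F(u)` for all `u ∈ ℓ¹` with `∑_k |u_k − x*_k| < ε`,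
then `x*` is sparse: `{k : x*_k ≠ 0}` is finite. -/
theorem stmt_19
    {Y : Type*} [NormedAddCommGroup Y] [InnerProductSpace ℝ Y] [CompleteSpace Y]
    (A : lp (fun _ : ℕ => ℝ) 2 →L[ℝ] Y) (y : Y) (α : ℝ) (hα : 0 < α)
    (p : ℕ → ℝ) (hp0 : ∀ k, 0 < p k) (hp1 : ∀ k, p k < 1)
    (hinf : 0 < ⨅ k, p k)
    (xstar : lp (fun _ : ℕ => ℝ) 2)
    (hx1 : Summable fun k => |xstar k|)
    (hxp : Summable fun k => |xstar k| ^ p k)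
    (ε : ℝ) (hε : 0 < ε)
    (hmin : ∀ u : lp (fun _ : ℕ => ℝ) 2, (Summable fun k => |u k|) →
      (∑' k, |u k - xstar k|) < ε →
      ENNReal.ofReal ((1 / 2) * ‖A xstar - y‖ ^ 2) +
          ENNReal.ofReal α * ∑' k, ENNReal.ofReal (|xstar k| ^ p k) ≤
        ENNReal.ofReal ((1 / 2) * ‖A u - y‖ ^ 2) +
          ENNReal.ofReal α * ∑' k, ENNReal.ofReal (|u k| ^ p k)) :
    {k : ℕ | xstar k ≠ 0}.Finite :=
  stmt_19_general A y α hα p hp0 hp1 xstar hx1 hxp ε hε hmin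
end
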